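/- Let f be a monotone nondecreasing set function with f(∅)=0 and additive weak-submodularity constant ε_f ≥ 0, meaning that for all S ⊆ T and x ∉ T, (f(T∪{x}) - f(T)) - (f(S∪{x}) - f(S)) ≤ ε_f. Then the greedy algorithm selecting N elements returns a set S^g with f(S^g) ≥ (1 - 1/e)·(max_{|S|=N} f(S) - (N-1)·ε_f). -/
import Mathlib

open Finset

private lemma marg_aux {U : Type*} [DecidableEq U]
    (f : Finset U → ℝ) (εf : ℝ) (hεf : 0 ≤ εf)
    (hweak : ∀ ⦃A B : Finset U⦄, A ⊆ B → ∀ x ∉ B,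
      (f (insert x B) - f B) - (f (insert x A) - f A) ≤ εf) :
    ∀ (D A : Finset U), Disjoint A D →
      f (A ∪ D) - f A ≤ (∑ t ∈ D, (f (insert t A) - f A)) + ((D.card - 1 : ℕ) : ℝ) * εf := by
  intro D
  induction D using Finset.induction_on with
  | empty => intro A _; simp
  | @insert d D' hd ih =>
    intro A hdisj
    have hdA : d ∉ A := fun h => Finset.disjoint_left.mp hdisj h (mem_insert_self d D')
    have hdisj' : Disjoint A D' := hdisj.mono_right (subset_insert _ _)
    by_cases hD' : D' = ∅
    · subst hD'
      have hA : A ∪ {d} = insert d A := by rw [Finset.union_comm]; exact (Finset.insert_eq d A).symm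
      simp [hA]
    · have hne : D'.Nonempty := nonempty_iff_ne_empty.mpr hD'
      have hcard : 1 ≤ D'.card := Finset.card_pos.mpr hne
      have hdU : d ∉ A ∪ D' := by simp [hdA, hd]
      have hw := hweak (Finset.subset_union_left (s₁ := A) (s₂ := D')) d hdU
      have hih := ih A hdisj'
      rw [Finset.union_insert, Finset.sum_insert hd, Finset.card_insert_of_notMem hd]
      have hc1 : ((D'.card + 1 - 1 : ℕ) : ℝ) = ((D'.card - 1 : ℕ) : ℝ) + 1 := by
        have : D'.card + 1 - 1 = (D'.card - 1) + 1 := by omega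
        rw [this]; push_cast; ring
      rw [hc1]
      linarith

/-- Greedy guarantee for weakly submodular functions with additive constant
`ε_f ≥ 0`: the greedy set `S^g` of size `N` satisfies
`f(S^g) ≥ (1 - 1/e)·(max_{|S|=N} f(S) - (N-1)·ε_f)`. -/
theorem stmt_12 {U : Type*} [Fintype U] [DecidableEq U]
    (f : Finset U → ℝ)
    (hmono : ∀ ⦃A B : Finset U⦄, A ⊆ B → f A ≤ f B)
    (hempty : f ∅ = 0)
    (εf : ℝ) (hεf : 0 ≤ εf)
    (hweak : ∀ ⦃A B : Finset U⦄, A ⊆ B → ∀ x ∉ B,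
      (f (insert x B) - f B) - (f (insert x A) - f A) ≤ εf)
    (N : ℕ) (hN1 : 1 ≤ N) (hN : N ≤ Fintype.card U)
    (S : ℕ → Finset U) (hS0 : S 0 = ∅)
    (hgreedy : ∀ k < N, ∃ e ∉ S k, S (k + 1) = insert e (S k) ∧
      ∀ e' ∉ S k, f (insert e' (S k)) - f (S k) ≤ f (insert e (S k)) - f (S k)) :
    ∀ T : Finset U, T.card = N →
      (1 - 1 / Real.exp 1) * (f T - ((N : ℝ) - 1) * εf) ≤ f (S N) := by
  intro T hT
  have hNpos : (0:ℝ) < N := by exact_mod_cast Nat.pos_of_ne_zero (by omega)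
  have hNne : (N:ℝ) ≠ 0 := ne_of_gt hNpos
  have hN1R : (1:ℝ) ≤ N := by exact_mod_cast hN1
  have hfSN0 : 0 ≤ f (S N) := by
    have := hmono (Finset.empty_subset (S N)); linarith [hempty]
  set C : ℝ := f T - ((N:ℝ) - 1) * εf with hC
  -- per-step inequality
  have hstep : ∀ k < N, C - f (S k) ≤ (N:ℝ) * (f (S (k+1)) - f (S k)) := by
    intro k hk
    obtain ⟨e, he, hSk1, hmax⟩ := hgreedy k hk
    have hgain : 0 ≤ f (S (k+1)) - f (S k) := by
      rw [hSk1]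
      have := hmono (Finset.subset_insert e (S k)); linarith
    set D := T \ S k with hD
    have hdisj : Disjoint (S k) D := Finset.disjoint_sdiff
    have hmarg := marg_aux f εf hεf hweak D (S k) hdisj
    have hcardD : D.card ≤ N := by
      calc D.card ≤ T.card := Finset.card_le_card Finset.sdiff_subset
      _ = N := hT
    have hsum : (∑ t ∈ D, (f (insert t (S k)) - f (S k)))
        ≤ (D.card : ℝ) * (f (S (k+1)) - f (S k)) := by
      have := Finset.sum_le_card_nsmul D (fun t => f (insert t (S k)) - f (S k))
        (f (S (k+1)) - f (S k)) (by
          intro t ht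
          have htn : t ∉ S k := (Finset.mem_sdiff.mp ht).2
          rw [hSk1]; exact hmax t htn)
      simpa [nsmul_eq_mul] using this
    have hsum2 : (D.card : ℝ) * (f (S (k+1)) - f (S k))
        ≤ (N:ℝ) * (f (S (k+1)) - f (S k)) := by
      apply mul_le_mul_of_nonneg_right _ hgain
      exact_mod_cast hcardD
    have heps : ((D.card - 1 : ℕ) : ℝ) * εf ≤ ((N:ℝ) - 1) * εf := by
      apply mul_le_mul_of_nonneg_right _ hεf
      have h1 : D.card - 1 ≤ N - 1 := by omega
      calc ((D.card - 1 : ℕ) : ℝ) ≤ ((N - 1 : ℕ) : ℝ) := by exact_mod_cast h1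
      _ = (N:ℝ) - 1 := by push_cast [Nat.cast_sub hN1]; ring
    have hTsub : f T ≤ f (S k ∪ D) := by
      apply hmono
      rw [hD, Finset.union_sdiff_self_eq_union]
      exact Finset.subset_union_right
    linarith
  set r : ℝ := 1 - 1/(N:ℝ) with hr
  have hr0 : 0 ≤ r := by
    have h : 1/(N:ℝ) ≤ 1 := by
      rw [div_le_one hNpos]; exact hN1R
    rw [hr]; linarith
  have key : ∀ k ≤ N, C - f (S k) ≤ r^k * (C - f (S 0)) := by
    intro k
    induction k with
    | zero => intro _; simp
    | succ k ih =>
      intro hk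
      have hk' : k < N := Nat.lt_of_succ_le hk
      have ih' := ih (le_of_lt hk')
      have hst := hstep k hk'
      have hdiv : (C - f (S k)) / N ≤ f (S (k+1)) - f (S k) := by
        rw [div_le_iff₀ hNpos]; linarith [hst]
      have hexp : r * (C - f (S k)) = (C - f (S k)) - (C - f (S k)) / N := by
        rw [hr]; field_simp
      have h1 : C - f (S (k+1)) ≤ r * (C - f (S k)) := by
        rw [hexp]; linarith
      calc C - f (S (k+1)) ≤ r * (C - f (S k)) := h1
        _ ≤ r * (r^k * (C - f (S 0))) := mul_le_mul_of_nonneg_left ih' hr0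
        _ = r^(k+1) * (C - f (S 0)) := by ring
  have hkeyN := key N le_rfl
  have hS0' : f (S 0) = 0 := by rw [hS0]; exact hempty
  rw [hS0', sub_zero] at hkeyN
  have hrN : r^N ≤ 1 / Real.exp 1 := by
    have h1 : r ≤ Real.exp (-(1/(N:ℝ))) := by
      have h := Real.add_one_le_exp (-(1/(N:ℝ)))
      rw [hr]; linarith
    have h2 : r^N ≤ (Real.exp (-(1/(N:ℝ))))^N := pow_le_pow_left₀ hr0 h1 N
    have h3 : (Real.exp (-(1/(N:ℝ))))^N = Real.exp ((N:ℝ) * (-(1/(N:ℝ)))) :=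
      (Real.exp_nat_mul _ N).symm
    have h4 : (N:ℝ) * (-(1/(N:ℝ))) = -1 := by field_simp
    rw [h3, h4, Real.exp_neg, ← one_div] at h2
    exact h2
  by_cases hC0 : 0 ≤ C
  · have : r^N * C ≤ (1 / Real.exp 1) * C := mul_le_mul_of_nonneg_right hrN hC0
    have hsub : C - f (S N) ≤ (1 / Real.exp 1) * C := le_trans hkeyN this
    nlinarith
  · push_neg at hC0
    have he1 : (1:ℝ) ≤ Real.exp 1 := by
      have := Real.add_one_le_exp (1:ℝ); linarith
    have hepos : (0:ℝ) < Real.exp 1 := Real.exp_pos 1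
    have hfac : 0 ≤ 1 - 1 / Real.exp 1 := by
      have : 1 / Real.exp 1 ≤ 1 := by rw [div_le_one hepos]; exact he1
      linarith
    have : (1 - 1 / Real.exp 1) * C ≤ 0 :=
      mul_nonpos_of_nonneg_of_nonpos hfac (le_of_lt hC0)
    linarith
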